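/- Let d = 2 and suppose H(x1,x2) = Σ_{n≥0} H_{n,n} P_n(x1;𝐫1) P_n(x2;𝐫2) (i.e. H_{n1,n2} = 0 whenever n1 ≠ n2) defines the density dμ•/dμ⊗ of (Y1,Y2) with respect to the product of Meixner laws. Then Y1+Y2 has law μ(𝐫1)∗μ(𝐫2) if and only if Y1 and Y2 are independent (i.e. H_{n,n} = 0 for all n ≥ 1). -/

import Mathlib

open MeasureTheory

/-- A Meixner class of probability laws `μ(𝐫)` on `ℝ`, indexed by the mean–variance
parameter `𝐫`, with orthogonal polynomials `P_n(·;𝐫)`, squared norms `𝔥_n(𝐫)`, and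
generating function `e^{x·u(z)}/M(u(z);𝐫) = Σ_n P_n(x;𝐫) zⁿ/n!`. -/
structure MeixnerFamily where
  μ : ℝ × ℝ → Measure ℝ
  P : ℕ → ℝ → ℝ × ℝ → ℝ
  𝔥 : ℕ → ℝ × ℝ → ℝ
  u : ℝ → ℝ
  M : ℝ → ℝ × ℝ → ℝ
  S : Set ℝ
  prob : ∀ r, IsProbabilityMeasure (μ r)
  S_nhds : S ∈ nhds (0 : ℝ)
  P_meas : ∀ n r, Measurable fun x => P n x r
  P_memL2 : ∀ n r, MemLp (fun x => P n x r) 2 (μ r)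
  P_zero : ∀ x r, P 0 x r = 1
  orth : ∀ r m n, ∫ x, P m x r * P n x r ∂(μ r) = if m = n then 𝔥 n r else 0
  𝔥_pos : ∀ n r, 0 < 𝔥 n r
  M_pos : ∀ r, ∀ z ∈ S, 0 < M (u z) r
  M_eq : ∀ r, ∀ z ∈ S, M (u z) r = ∫ x, Real.exp (u z * x) ∂(μ r)
  gen : ∀ r, ∀ z ∈ S, ∀ x : ℝ,
    HasSum (fun n => P n x r * z ^ n / (n.factorial : ℝ))
      (Real.exp (x * u z) / M (u z) r)
  complete : ∀ r, ∀ g : ℝ → ℝ, Measurable g → MemLp g 2 (μ r) →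
    (∀ n, ∫ x, g x * P n x r ∂(μ r) = 0) → g =ᵐ[μ r] 0

/-!
Expanding the product of the two generating functions,
`Σ_m zᵐ Σ_{k+l=m} P_k(x1;r1) P_l(x2;r2) / (k! l!) = e^{(x1+x2)u(z)} / (M(u(z);r1) M(u(z);r2))`,
shows that every coefficient of `zᵐ` is a function of `x1 + x2` alone. If `Y1 + Y2` has the
law of the independent sum, these coefficients therefore have the same expectation under the
density `H` as under independence. For a diagonal `H` only the term `k = l = n` of the
coefficient of `z^{2n}` survives, so `H_{n,n} 𝔥_n(r1) 𝔥_n(r2) = 0` for `n ≥ 1`.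

Conversely, if `H_{n,n} = 0` for `n ≥ 1` then `H` and `1` have the same coefficients against
every `P_i ⊗ P_j`; completeness of the `P_n` in each variable, combined through Fubini,
gives `H = 1` almost everywhere.
-/

open Filter Topology Finset
open scoped Nat

theorem eq_of_hasSum_mul_pow {𝕜 : Type*} [NontriviallyNormedField 𝕜] {c d : ℕ → 𝕜}
    {f : 𝕜 → 𝕜} (hc : ∀ᶠ z in 𝓝 0, HasSum (fun m => c m * z ^ m) (f z))
    (hd : ∀ᶠ z in 𝓝 0, HasSum (fun m => d m * z ^ m) (f z)) : c = d := by
  have hp : ∀ e : ℕ → 𝕜, (∀ᶠ z in 𝓝 0, HasSum (fun m => e m * z ^ m) (f z)) →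
      HasFPowerSeriesAt f (FormalMultilinearSeries.ofScalars 𝕜 e) 0 := by
    intro e he
    rw [hasFPowerSeriesAt_iff]
    filter_upwards [he] with z hz
    simpa [FormalMultilinearSeries.coeff_ofScalars, mul_comm] using hz
  funext m
  simpa [FormalMultilinearSeries.coeff_ofScalars] using
    congrArg (·.coeff m) ((hp c hc).eq_formalMultilinearSeries (hp d hd))

theorem HasSum.mul_antidiagonal_of_summable_norm {R : Type*} [NormedRing R] [CompleteSpace R]
    {f g : ℕ → R} {a b : R} (hf : HasSum f a) (hg : HasSum g b)
    (hf' : Summable fun n => ‖f n‖) (hg' : Summable fun n => ‖g n‖) :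
    HasSum (fun n => ∑ kl ∈ antidiagonal n, f kl.1 * g kl.2) (a * b) := by
  rw [(summable_norm_sum_mul_antidiagonal_of_summable_norm hf' hg').of_norm.hasSum_iff,
    ← hf.tsum_eq, ← hg.tsum_eq]
  exact (tsum_mul_tsum_eq_tsum_sum_antidiagonal_of_summable_norm hf' hg').symm

theorem sq_integral_mul_le {α : Type*} [MeasurableSpace α] {μ : Measure α} {f g : α → ℝ}
    (hf : MemLp f 2 μ) (hg : MemLp g 2 μ) :
    (∫ a, f a * g a ∂μ) ^ 2 ≤ (∫ a, f a ^ 2 ∂μ) * ∫ a, g a ^ 2 ∂μ := by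
  have holder := integral_mul_norm_le_Lp_mul_Lq (p := 2) (q := 2) Real.HolderConjugate.two_two
    (by simpa using hf) (by simpa using hg)
  simp only [Real.norm_eq_abs, Real.rpow_two, sq_abs, ← Real.sqrt_eq_rpow, ← abs_mul] at holder
  calc (∫ a, f a * g a ∂μ) ^ 2 = |∫ a, f a * g a ∂μ| ^ 2 := (sq_abs _).symm
    _ ≤ (√(∫ a, f a ^ 2 ∂μ) * √(∫ a, g a ^ 2 ∂μ)) ^ 2 := by
        gcongr
        exact (abs_integral_le_integral_abs).trans holder
    _ = (∫ a, f a ^ 2 ∂μ) * ∫ a, g a ^ 2 ∂μ := by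
        rw [mul_pow, Real.sq_sqrt (integral_nonneg fun _ => sq_nonneg _),
          Real.sq_sqrt (integral_nonneg fun _ => sq_nonneg _)]

theorem memLp_two_integral_mul_right {α β : Type*} [MeasurableSpace α] [MeasurableSpace β]
    {μ : Measure α} {ν : Measure β} [SFinite μ] [SFinite ν] {G : α × β → ℝ} {g : β → ℝ}
    (hG : MemLp G 2 (μ.prod ν)) (hg : MemLp g 2 ν) :
    MemLp (fun x => ∫ y, G (x, y) * g y ∂ν) 2 μ := by
  have hmeas : AEStronglyMeasurable (fun x => ∫ y, G (x, y) * g y ∂ν) μ :=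
    (hG.1.mul hg.1.comp_snd).integral_prod_right'
  rw [memLp_two_iff_integrable_sq hmeas]
  have hG2 : Integrable (fun p => G p ^ 2) (μ.prod ν) := hG.integrable_sq
  refine (hG2.integral_prod_left.mul_const (∫ y, g y ^ 2 ∂ν)).mono' (hmeas.pow 2) ?_
  filter_upwards [hG2.prod_right_ae, hG.1.prodMk_left] with x hx hxm
  rw [Real.norm_eq_abs, abs_of_nonneg (sq_nonneg _)]
  exact sq_integral_mul_le ((memLp_two_iff_integrable_sq hxm).2 hx) hg

theorem integral_mul_comp_eq_of_map_withDensity_eq {α β : Type*} [MeasurableSpace α]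
    [MeasurableSpace β] {μ : Measure α} {f : α → β} {ρ : α → ℝ} {g : β → ℝ}
    (hf : Measurable f) (hρ : Measurable ρ) (hρ_nonneg : ∀ a, 0 ≤ ρ a) (hg : Measurable g)
    (h : (μ.withDensity fun a => ENNReal.ofReal (ρ a)).map f = μ.map f) :
    ∫ a, ρ a * g (f a) ∂μ = ∫ a, g (f a) ∂μ := by
  have hρg : ∫ a, g (f a) ∂μ.withDensity (fun a => ENNReal.ofReal (ρ a))
      = ∫ a, ρ a * g (f a) ∂μ := by
    rw [integral_withDensity_eq_integral_toReal_smul hρ.ennreal_ofReal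
      (ae_of_all _ fun _ => ENNReal.ofReal_lt_top)]
    simp only [ENNReal.toReal_ofReal (hρ_nonneg _), smul_eq_mul]
  rw [← hρg, ← integral_map hf.aemeasurable hg.aestronglyMeasurable, h,
    integral_map hf.aemeasurable hg.aestronglyMeasurable]

attribute [instance] MeixnerFamily.prob

namespace MeixnerFamily

variable (MF : MeixnerFamily)

theorem 𝔥_zero (r : ℝ × ℝ) : MF.𝔥 0 r = 1 := by
  simpa [MF.P_zero] using (MF.orth r 0 0).symm

theorem integral_P (n : ℕ) (r : ℝ × ℝ) :
    ∫ x, MF.P n x r ∂MF.μ r = if n = 0 then 1 else 0 := by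
  simpa [MF.P_zero, MF.𝔥_zero, eq_comm] using MF.orth r n 0

variable {MF} {r1 r2 : ℝ × ℝ}

theorem memLp_P_mul_P (i j : ℕ) :
    MemLp (fun p : ℝ × ℝ => MF.P i p.1 r1 * MF.P j p.2 r2) 2 ((MF.μ r1).prod (MF.μ r2)) := by
  have hm : AEStronglyMeasurable (fun p : ℝ × ℝ => MF.P i p.1 r1 * MF.P j p.2 r2)
      ((MF.μ r1).prod (MF.μ r2)) :=
    ((MF.P_meas i r1).comp measurable_fst).mul ((MF.P_meas j r2).comp measurable_snd)
      |>.aestronglyMeasurable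
  rw [memLp_two_iff_integrable_sq hm]
  simpa [mul_pow] using (MF.P_memL2 i r1).integrable_sq.mul_prod (MF.P_memL2 j r2).integrable_sq

theorem integrable_mul_P_mul_P {H : ℝ × ℝ → ℝ} (hH : MemLp H 2 ((MF.μ r1).prod (MF.μ r2)))
    (i j : ℕ) :
    Integrable (fun p => H p * MF.P i p.1 r1 * MF.P j p.2 r2) ((MF.μ r1).prod (MF.μ r2)) := by
  simpa only [Pi.mul_def, mul_assoc] using hH.integrable_mul (memLp_P_mul_P i j)

variable (MF r1 r2) in
noncomputable def genProdCoeff (m : ℕ) (x1 x2 : ℝ) : ℝ :=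
  ∑ kl ∈ antidiagonal m, MF.P kl.1 x1 r1 / kl.1 ! * (MF.P kl.2 x2 r2 / kl.2 !)

theorem hasSum_genProdCoeff {z : ℝ} (hz : z ∈ MF.S) (x1 x2 : ℝ) :
    HasSum (fun m => MF.genProdCoeff r1 r2 m x1 x2 * z ^ m)
      (Real.exp ((x1 + x2) * MF.u z) / (MF.M (MF.u z) r1 * MF.M (MF.u z) r2)) := by
  have hg1 := MF.gen r1 z hz x1
  have hg2 := MF.gen r2 z hz x2
  have hprod := hg1.mul_antidiagonal_of_summable_norm hg2 hg1.summable.abs hg2.summable.abs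
  rw [add_mul, Real.exp_add, ← div_mul_div_comm]
  convert hprod using 2 with m
  · rfl
  simp only [genProdCoeff, sum_mul]
  refine sum_congr rfl fun kl hkl => ?_
  rw [← mem_antidiagonal.mp hkl, pow_add]
  ring

/-- The product of the two generating functions is `e^{(x1+x2)u(z)}/(M(u(z);r1) M(u(z);r2))`,
a function of `x1 + x2` alone. -/
theorem genProdCoeff_eq_add (m : ℕ) (x1 x2 : ℝ) :
    MF.genProdCoeff r1 r2 m x1 x2 = MF.genProdCoeff r1 r2 m (x1 + x2) 0 := by
  have hsum (y1 y2 : ℝ) : ∀ᶠ z in 𝓝 0, HasSum (fun m => MF.genProdCoeff r1 r2 m y1 y2 * z ^ m)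
      (Real.exp ((y1 + y2) * MF.u z) / (MF.M (MF.u z) r1 * MF.M (MF.u z) r2)) :=
    mem_of_superset MF.S_nhds fun z hz => hasSum_genProdCoeff hz y1 y2
  have hsum_add := hsum (x1 + x2) 0
  simp only [add_zero] at hsum_add
  exact congrFun (eq_of_hasSum_mul_pow (hsum x1 x2) hsum_add) m

variable (MF r1 r2) in
theorem measurable_genProdCoeff (m : ℕ) :
    Measurable fun x => MF.genProdCoeff r1 r2 m x 0 :=
  Finset.measurable_sum _ fun kl _ => ((MF.P_meas kl.1 r1).div_const _).mul_const _

theorem integral_mul_genProdCoeff {H : ℝ × ℝ → ℝ} (hH : MemLp H 2 ((MF.μ r1).prod (MF.μ r2)))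
    (m : ℕ) :
    ∫ p, H p * MF.genProdCoeff r1 r2 m p.1 p.2 ∂((MF.μ r1).prod (MF.μ r2))
      = ∑ kl ∈ antidiagonal m, (∫ p, H p * MF.P kl.1 p.1 r1 * MF.P kl.2 p.2 r2
          ∂((MF.μ r1).prod (MF.μ r2))) / (kl.1 ! * kl.2 !) := by
  have hsum : (fun p : ℝ × ℝ => H p * MF.genProdCoeff r1 r2 m p.1 p.2) = fun p =>
      ∑ kl ∈ antidiagonal m, H p * MF.P kl.1 p.1 r1 * MF.P kl.2 p.2 r2 / (kl.1 ! * kl.2 !) := by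
    funext p
    simp only [genProdCoeff, mul_sum]
    exact sum_congr rfl fun _ _ => by ring
  rw [hsum, integral_finsetSum _ fun kl _ => (integrable_mul_P_mul_P hH kl.1 kl.2).div_const _]
  simp_rw [integral_div]

variable (MF r1 r2) in
/-- `Hc n` is the coefficient `H_{n,n}` of the expansion `H = Σ_n H_{n,n} P_n ⊗ P_n`. -/
def HasDiagonalExpansion (H : ℝ × ℝ → ℝ) (Hc : ℕ → ℝ) : Prop :=
  ∀ n1 n2 : ℕ, ∫ p, H p * MF.P n1 p.1 r1 * MF.P n2 p.2 r2 ∂((MF.μ r1).prod (MF.μ r2))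
    = if n1 = n2 then Hc n1 * (MF.𝔥 n1 r1 * MF.𝔥 n2 r2) else 0

variable (MF r1 r2) in
theorem hasDiagonalExpansion_one : MF.HasDiagonalExpansion r1 r2 1 (Pi.single 0 1) := by
  intro n1 n2
  simp only [Pi.one_apply, one_mul]
  rw [integral_prod_mul (fun x => MF.P n1 x r1) (fun y => MF.P n2 y r2), integral_P, integral_P]
  split_ifs <;> simp_all [𝔥_zero]

theorem HasDiagonalExpansion.integral_mul_genProdCoeff_two_mul {H : ℝ × ℝ → ℝ} {Hc : ℕ → ℝ}
    (hexp : MF.HasDiagonalExpansion r1 r2 H Hc) (hH : MemLp H 2 ((MF.μ r1).prod (MF.μ r2)))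
    (n : ℕ) :
    ∫ p, H p * MF.genProdCoeff r1 r2 (2 * n) p.1 p.2 ∂((MF.μ r1).prod (MF.μ r2))
      = Hc n * (MF.𝔥 n r1 * MF.𝔥 n r2) / (n ! * n !) := by
  rw [integral_mul_genProdCoeff hH, sum_eq_single (n, n)]
  · simp [hexp n n]
  · rintro ⟨k, l⟩ hkl hne
    have hsum : k + l = 2 * n := HasAntidiagonal.mem_antidiagonal.mp hkl
    have hkl : k ≠ l := fun h => hne (by subst h; simp only [Prod.mk.injEq]; omega)
    simp [hexp k l, hkl]
  · simp [two_mul]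

theorem HasDiagonalExpansion.coeff_eq_zero_of_map_add_eq {H : ℝ × ℝ → ℝ} {Hc : ℕ → ℝ}
    (hexp : MF.HasDiagonalExpansion r1 r2 H Hc) (hHmeas : Measurable H) (hHnn : ∀ p, 0 ≤ H p)
    (hH : MemLp H 2 ((MF.μ r1).prod (MF.μ r2)))
    (hmap : Measure.map (fun p : ℝ × ℝ => p.1 + p.2)
        (((MF.μ r1).prod (MF.μ r2)).withDensity fun p => ENNReal.ofReal (H p))
      = Measure.map (fun p : ℝ × ℝ => p.1 + p.2) ((MF.μ r1).prod (MF.μ r2)))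
    {n : ℕ} (hn : 1 ≤ n) : Hc n = 0 := by
  have hmoment := integral_mul_comp_eq_of_map_withDensity_eq
    (f := fun p : ℝ × ℝ => p.1 + p.2) (by fun_prop) hHmeas hHnn
    (MF.measurable_genProdCoeff r1 r2 (2 * n)) hmap
  simp only [← genProdCoeff_eq_add] at hmoment
  have hindep := (MF.hasDiagonalExpansion_one r1 r2).integral_mul_genProdCoeff_two_mul
    (memLp_const 1) n
  simp only [Pi.one_apply, one_mul, Pi.single_eq_of_ne (show n ≠ 0 by omega)] at hindep
  rw [hexp.integral_mul_genProdCoeff_two_mul hH, hindep] at hmoment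
  simpa [(MF.𝔥_pos n r1).ne', (MF.𝔥_pos n r2).ne', Nat.factorial_ne_zero] using hmoment

theorem ae_eq_zero_of_integral_mul_P_mul_P_eq_zero {G : ℝ × ℝ → ℝ} (hGmeas : Measurable G)
    (hG : MemLp G 2 ((MF.μ r1).prod (MF.μ r2)))
    (horth : ∀ i j, ∫ p, G p * MF.P i p.1 r1 * MF.P j p.2 r2 ∂((MF.μ r1).prod (MF.μ r2)) = 0) :
    G =ᵐ[(MF.μ r1).prod (MF.μ r2)] 0 := by
  have hpair : ∀ j, (fun x => ∫ y, G (x, y) * MF.P j y r2 ∂MF.μ r2) =ᵐ[MF.μ r1] 0 := by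
    intro j
    have hmeas : Measurable fun x => ∫ y, G (x, y) * MF.P j y r2 ∂MF.μ r2 :=
      (hGmeas.mul ((MF.P_meas j r2).comp measurable_snd)).stronglyMeasurable
        |>.integral_prod_right'.measurable
    refine MF.complete r1 _ hmeas (memLp_two_integral_mul_right hG (MF.P_memL2 j r2)) fun i => ?_
    rw [← horth i j, integral_prod _ (integrable_mul_P_mul_P hG i j)]
    congr 1 with x
    rw [← integral_mul_const]
    congr 1 with y
    ring
  have hsec : ∀ᵐ x ∂MF.μ r1, MemLp (fun y => G (x, y)) 2 (MF.μ r2) := by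
    filter_upwards [hG.integrable_sq.prod_right_ae] with x hx
    exact (memLp_two_iff_integrable_sq
      (hGmeas.comp measurable_prodMk_left).aestronglyMeasurable).2 hx
  rw [EventuallyEq, Measure.ae_prod_iff_ae_ae (measurableSet_eq_fun hGmeas measurable_zero)]
  filter_upwards [ae_all_iff.2 hpair, hsec] with x hx hxL2
  exact MF.complete r2 _ (hGmeas.comp measurable_prodMk_left) hxL2 hx

theorem HasDiagonalExpansion.ae_eq {H K : ℝ × ℝ → ℝ} {Hc : ℕ → ℝ}
    (hH : MF.HasDiagonalExpansion r1 r2 H Hc) (hK : MF.HasDiagonalExpansion r1 r2 K Hc)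
    (hHmeas : Measurable H) (hKmeas : Measurable K) (hH2 : MemLp H 2 ((MF.μ r1).prod (MF.μ r2)))
    (hK2 : MemLp K 2 ((MF.μ r1).prod (MF.μ r2))) : H =ᵐ[(MF.μ r1).prod (MF.μ r2)] K := by
  have hdiff := ae_eq_zero_of_integral_mul_P_mul_P_eq_zero (hHmeas.sub hKmeas) (hH2.sub hK2)
    fun i j => by
      simp only [Pi.sub_apply, sub_mul]
      rw [integral_sub (integrable_mul_P_mul_P hH2 i j) (integrable_mul_P_mul_P hK2 i j),
        hH i j, hK i j, sub_self]
  filter_upwards [hdiff] with p hp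
  exact sub_eq_zero.1 hp

theorem HasDiagonalExpansion.map_add_eq_of_coeff_eq_zero {H : ℝ × ℝ → ℝ} {Hc : ℕ → ℝ}
    (hexp : MF.HasDiagonalExpansion r1 r2 H Hc) (hHmeas : Measurable H)
    (hH : MemLp H 2 ((MF.μ r1).prod (MF.μ r2))) (hHc0 : Hc 0 = 1)
    (hHc : ∀ n : ℕ, 1 ≤ n → Hc n = 0) :
    Measure.map (fun p : ℝ × ℝ => p.1 + p.2)
        (((MF.μ r1).prod (MF.μ r2)).withDensity fun p => ENNReal.ofReal (H p))
      = Measure.map (fun p : ℝ × ℝ => p.1 + p.2) ((MF.μ r1).prod (MF.μ r2)) := by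
  obtain rfl : Hc = Pi.single 0 1 := by
    funext n
    rcases n with _ | n
    · simp [hHc0]
    · simp [hHc (n + 1) (by omega)]
  have hH1 := hexp.ae_eq (MF.hasDiagonalExpansion_one r1 r2) hHmeas measurable_const hH
    (memLp_const 1)
  have hdens : (fun p => ENNReal.ofReal (H p)) =ᵐ[(MF.μ r1).prod (MF.μ r2)] 1 := by
    filter_upwards [hH1] with p hp
    simp [hp]
  rw [withDensity_congr_ae hdens, withDensity_one]

end MeixnerFamily

/-- Corollary 1: for a diagonal expansion `H(x1,x2) = Σ_n H_{n,n} P_n(x1;𝐫1)P_n(x2;𝐫2)`,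
the sum `Y1+Y2` has law `μ(𝐫1)∗μ(𝐫2)` iff `Y1` and `Y2` are independent,
i.e. `H_{n,n} = 0` for all `n ≥ 1`. -/
theorem meixner_diagonal_expansion_sum_iff_indep
    (MF : MeixnerFamily) (r1 r2 : ℝ × ℝ)
    (H : ℝ × ℝ → ℝ) (hHmeas : Measurable H) (hHnn : ∀ p, 0 ≤ H p)
    (hHL2 : MemLp H 2 ((MF.μ r1).prod (MF.μ r2)))
    (Hc : ℕ → ℝ)
    (hcoef : ∀ n1 n2 : ℕ,
      ∫ p, H p * MF.P n1 p.1 r1 * MF.P n2 p.2 r2 ∂((MF.μ r1).prod (MF.μ r2))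
        = if n1 = n2 then Hc n1 * (MF.𝔥 n1 r1 * MF.𝔥 n2 r2) else 0)
    (hone : Hc 0 = 1) :
    (Measure.map (fun p : ℝ × ℝ => p.1 + p.2)
        (((MF.μ r1).prod (MF.μ r2)).withDensity fun p => ENNReal.ofReal (H p))
      = Measure.map (fun p : ℝ × ℝ => p.1 + p.2) ((MF.μ r1).prod (MF.μ r2)))
    ↔ (∀ n : ℕ, 1 ≤ n → Hc n = 0) := by
  have hexp : MF.HasDiagonalExpansion r1 r2 H Hc := hcoef
  exact ⟨fun hmap _ hn => hexp.coeff_eq_zero_of_map_add_eq hHmeas hHnn hHL2 hmap hn,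
    hexp.map_add_eq_of_coeff_eq_zero hHmeas hHL2 hone⟩
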